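/- arXiv:math/0412290 — 5 statements merged into one kernel-verified Lean document; each statement's English description precedes it below -/
import Mathlib

section
/- Let λ be a (nonnegative) Borel measure on ℝ and C > 0 a constant such that the Poisson integral satisfies ∫_ℝ y/((s−x)² + y²) dλ(s) ≤ C·y for every x ∈ ℝ and every y > 0. Then λ is the zero measure. -/
/-!
On the ball `B(x, y)` the Poisson kernel is at least `1 / (2y)`, so the bound `C y` on the Poisson
integral gives `λ(B(x, y)) ≤ 2 C y²`. A measure on `ℝ` whose balls have measure `O(r²)` vanishes:
cutting a unit interval into `N` pieces of length `1/N` bounds its measure by `2 C / N`.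
-/

open MeasureTheory Set Filter Metric

lemma measure_Ico_add_nat_mul_le {μ : Measure ℝ} {t : ℝ} {B : ENNReal}
    (h : ∀ c, μ (Ico c (c + t)) ≤ B) (n : ℕ) (c : ℝ) :
    μ (Ico c (c + n * t)) ≤ n * B := by
  induction n with
  | zero => simp
  | succ n ih =>
    calc μ (Ico c (c + (n + 1 : ℕ) * t))
        ≤ μ (Ico c (c + n * t) ∪ Ico (c + n * t) (c + n * t + t)) := by
          refine measure_mono ((Ico_subset_Ico_union_Ico (b := c + n * t)).trans_eq ?_)
          push_cast
          ring_nf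
      _ ≤ n * B + B := (measure_union_le _ _).trans (add_le_add ih (h _))
      _ = (n + 1 : ℕ) * B := by push_cast; ring

lemma measure_eq_zero_of_measure_ball_le_sq {μ : Measure ℝ} {K : ℝ}
    (h : ∀ x r, 0 < r → μ (ball x r) ≤ ENNReal.ofReal (K * r ^ 2)) : μ = 0 := by
  have hIco : ∀ c : ℝ, μ (Ico c (c + 1)) = 0 := by
    intro c
    have hN : ∀ N : ℕ, 0 < N → μ (Ico c (c + 1)) ≤ ENNReal.ofReal (K / N) := by
      intro N hN
      have hNpos : (0 : ℝ) < N := Nat.cast_pos.mpr hN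
      have hpiece : ∀ c', μ (Ico c' (c' + 1 / N)) ≤ ENNReal.ofReal (K * (1 / N) ^ 2) := by
        intro c'
        refine (measure_mono ?_).trans (h c' _ (by positivity))
        rw [Real.ball_eq_Ioo]
        exact Ico_subset_Ioo_left (by linarith [one_div_pos.mpr hNpos])
      calc μ (Ico c (c + 1)) = μ (Ico c (c + N * (1 / N))) := by rw [mul_one_div_cancel hNpos.ne']
        _ ≤ N * ENNReal.ofReal (K * (1 / N) ^ 2) := measure_Ico_add_nat_mul_le hpiece N c
        _ = ENNReal.ofReal (K / N) := by
          rw [← ENNReal.ofReal_natCast, ← ENNReal.ofReal_mul hNpos.le]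
          congr 1
          field_simp
    have hlim : Tendsto (fun N : ℕ ↦ ENNReal.ofReal (K / N)) atTop (nhds 0) := by
      simpa using ENNReal.tendsto_ofReal (tendsto_const_div_atTop_nhds_zero_nat K)
    exact le_zero_iff.mp (ge_of_tendsto hlim (eventually_atTop.mpr ⟨1, hN⟩))
  rw [← Measure.measure_univ_eq_zero, ← iUnion_Ico_intCast]
  exact measure_iUnion_null fun n ↦ hIco n

lemma one_div_two_mul_le_poissonKernel {s x y : ℝ} (hs : dist s x < y) :
    1 / (2 * y) ≤ y / ((s - x) ^ 2 + y ^ 2) := by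
  have hy : 0 < y := dist_nonneg.trans_lt hs
  have hsq : (s - x) ^ 2 < y ^ 2 := by
    rw [← sq_abs]
    exact pow_lt_pow_left₀ hs (abs_nonneg _) two_ne_zero
  rw [div_le_div_iff₀ (by positivity) (by positivity)]
  nlinarith

lemma measure_ball_le_of_poisson_integral_le {lam : Measure ℝ} {C x y : ℝ} (hy : 0 < y)
    (hbd : (∫⁻ s, ENNReal.ofReal (y / ((s - x) ^ 2 + y ^ 2)) ∂lam) ≤ ENNReal.ofReal (C * y)) :
    lam (ball x y) ≤ ENNReal.ofReal (2 * C * y ^ 2) := by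
  have hc : (0 : ℝ) < 1 / (2 * y) := by positivity
  have hmarkov : ENNReal.ofReal (1 / (2 * y)) * lam (ball x y) ≤ ENNReal.ofReal (C * y) := by
    refine le_trans ?_ ((mul_meas_ge_le_lintegral (by fun_prop) (ENNReal.ofReal (1 / (2 * y)))).trans hbd)
    gcongr
    exact fun s hs ↦ ENNReal.ofReal_le_ofReal (one_div_two_mul_le_poissonKernel hs)
  rw [mul_comm, ← ENNReal.le_div_iff_mul_le (.inl (ENNReal.ofReal_pos.mpr hc).ne')
    (.inl ENNReal.ofReal_ne_top), ← ENNReal.ofReal_div_of_pos hc] at hmarkov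
  convert hmarkov using 2
  field_simp

theorem poisson_integral_bounded_implies_measure_zero_general
    (lam : Measure ℝ) (C : ℝ)
    (hbd : ∀ x y : ℝ, 0 < y →
      (∫⁻ s, ENNReal.ofReal (y / ((s - x) ^ 2 + y ^ 2)) ∂lam) ≤ ENNReal.ofReal (C * y)) :
    lam = 0 :=
  measure_eq_zero_of_measure_ball_le_sq fun x y hy ↦
    measure_ball_le_of_poisson_integral_le hy (hbd x y hy)

/-- If a nonnegative Borel measure `λ` on `ℝ` has Poisson integral
`∫ y/((s−x)² + y²) dλ(s)` bounded by `C·y` for every point `(x,y)` of the upper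
half-plane, then `λ = 0`. -/
theorem poisson_integral_bounded_implies_measure_zero
    (lam : Measure ℝ) (C : ℝ) (hC : 0 < C)
    (hbd : ∀ x y : ℝ, 0 < y →
      (∫⁻ s, ENNReal.ofReal (y / ((s - x) ^ 2 + y ^ 2)) ∂lam) ≤ ENNReal.ofReal (C * y)) :
    lam = 0 :=
  poisson_integral_bounded_implies_measure_zero_general lam C hbd
end

section
/- Let A be an n × m real matrix all of whose entries are strictly positive. Then for all vectors x, y ∈ ℝ^m with all coordinates strictly positive, d(Ax, Ay) ≤ d(x, y), where d denotes the Hilbert projective metric. -/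
/-- The Hilbert projective metric on vectors of `ℝ^k` with strictly positive coordinates:
`d(u,v) = log(max_i u_i/v_i) − log(min_i u_i/v_i) = log(max_{i,j} (u_i v_j)/(u_j v_i))`. -/
noncomputable def hilbertDist {k : ℕ} (u v : Fin k → ℝ) : ℝ :=
  Real.log (⨆ i, u i / v i) - Real.log (⨅ i, u i / v i)

/-- A matrix with strictly positive entries is non-expansive for the Hilbert projective
metric: `d(Ax, Ay) ≤ d(x, y)` for all strictly positive vectors `x, y`. -/
theorem hilbertDist_mulVec_le {n m : ℕ} (hn : 0 < n) (hm : 0 < m)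
    (A : Matrix (Fin n) (Fin m) ℝ) (hA : ∀ i j, 0 < A i j)
    (x y : Fin m → ℝ) (hx : ∀ i, 0 < x i) (hy : ∀ i, 0 < y i) :
    hilbertDist (A.mulVec x) (A.mulVec y) ≤ hilbertDist x y := by
  have hm' : Nonempty (Fin m) := ⟨⟨0, hm⟩⟩
  have hn' : Nonempty (Fin n) := ⟨⟨0, hn⟩⟩
  set M : ℝ := ⨆ j, x j / y j with hMdef
  set c : ℝ := ⨅ j, x j / y j with hcdef
  have hbddA : BddAbove (Set.range fun j => x j / y j) :=
    (Set.finite_range _).bddAbove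
  have hbddB : BddBelow (Set.range fun j => x j / y j) :=
    (Set.finite_range _).bddBelow
  have hMle : ∀ j, x j / y j ≤ M := fun j => le_ciSup hbddA j
  have hcle : ∀ j, c ≤ x j / y j := fun j => ciInf_le hbddB j
  have hcpos : 0 < c := by
    obtain ⟨j0, hj0⟩ := Finite.exists_min fun j => x j / y j
    have : c = x j0 / y j0 := le_antisymm (hcle j0) (le_ciInf hj0)
    rw [this]; exact div_pos (hx j0) (hy j0)
  have hMpos : 0 < M := lt_of_lt_of_le hcpos (hcle (Classical.arbitrary _) |>.trans (hMle _))
  -- positivity of Ay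
  have hAy : ∀ i, 0 < A.mulVec y i := fun i => by
    apply Finset.sum_pos (fun j _ => mul_pos (hA i j) (hy j)) ⟨Classical.arbitrary _, Finset.mem_univ _⟩
  have hAx : ∀ i, 0 < A.mulVec x i := fun i => by
    apply Finset.sum_pos (fun j _ => mul_pos (hA i j) (hx j)) ⟨Classical.arbitrary _, Finset.mem_univ _⟩
  have hub : ∀ i, A.mulVec x i / A.mulVec y i ≤ M := by
    intro i
    rw [div_le_iff₀ (hAy i)]
    calc A.mulVec x i = ∑ j, A i j * x j := rfl
      _ ≤ ∑ j, M * (A i j * y j) := by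
          apply Finset.sum_le_sum
          intro j _
          have : x j ≤ M * y j := by
            rw [← div_le_iff₀ (hy j)]; exact hMle j
          calc A i j * x j ≤ A i j * (M * y j) :=
                mul_le_mul_of_nonneg_left this (hA i j).le
            _ = M * (A i j * y j) := by ring
      _ = M * A.mulVec y i := by rw [← Finset.mul_sum]; rfl
  have hlb : ∀ i, c ≤ A.mulVec x i / A.mulVec y i := by
    intro i
    rw [le_div_iff₀ (hAy i)]
    calc c * A.mulVec y i = ∑ j, c * (A i j * y j) := by
          rw [← Finset.mul_sum]; rfl
      _ ≤ ∑ j, A i j * x j := by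
          apply Finset.sum_le_sum
          intro j _
          have : c * y j ≤ x j := by
            rw [← le_div_iff₀ (hy j)]; exact hcle j
          calc c * (A i j * y j) = A i j * (c * y j) := by ring
            _ ≤ A i j * x j := mul_le_mul_of_nonneg_left this (hA i j).le
      _ = A.mulVec x i := rfl
  have hsup_le : (⨆ i, A.mulVec x i / A.mulVec y i) ≤ M := ciSup_le hub
  have hle_inf : c ≤ ⨅ i, A.mulVec x i / A.mulVec y i := le_ciInf hlb
  have hsup_pos : 0 < ⨆ i, A.mulVec x i / A.mulVec y i := by
    obtain ⟨i0⟩ := hn'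
    exact lt_of_lt_of_le (div_pos (hAx i0) (hAy i0))
      (le_ciSup ((Set.finite_range fun i => A.mulVec x i / A.mulVec y i).bddAbove) i0)
  have hinf_pos : 0 < ⨅ i, A.mulVec x i / A.mulVec y i := lt_of_lt_of_le hcpos hle_inf
  unfold hilbertDist
  have h1 : Real.log (⨆ i, A.mulVec x i / A.mulVec y i) ≤ Real.log M :=
    Real.log_le_log hsup_pos hsup_le
  have h2 : Real.log c ≤ Real.log (⨅ i, A.mulVec x i / A.mulVec y i) :=
    Real.log_le_log hcpos hle_inf
  linarith
end

section
/- Let A be an n × m real matrix all of whose entries are strictly positive, and let x, y ∈ ℝ^m be vectors with all coordinates strictly positive such that x is not a positive scalar multiple of y, and such that Ax is not a positive scalar multiple of Ay. Then d(Ax, Ay) < d(x, y), where d denotes the Hilbert projective metric. -/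
open Finset

lemma fin_sup_attained {k : ℕ} (hk : 0 < k) (f : Fin k → ℝ) :
    ∃ i, (⨆ j, f j) = f i ∧ ∀ j, f j ≤ f i := by
  haveI : Nonempty (Fin k) := ⟨⟨0, hk⟩⟩
  obtain ⟨i, hi⟩ := Finite.exists_max f
  exact ⟨i, le_antisymm (ciSup_le hi) (le_ciSup (Set.Finite.bddAbove (Set.finite_range f)) i), hi⟩

lemma sup_ratio_lt {n m : ℕ} (hn : 0 < n) (hm : 0 < m)
    (A : Matrix (Fin n) (Fin m) ℝ) (hA : ∀ i j, 0 < A i j)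
    (x y : Fin m → ℝ) (hx : ∀ i, 0 < x i) (hy : ∀ i, 0 < y i)
    (hxy : ¬ ∃ c : ℝ, 0 < c ∧ x = c • y) :
    (⨆ i, A.mulVec x i / A.mulVec y i) < ⨆ i, x i / y i := by
  haveI : Nonempty (Fin m) := ⟨⟨0, hm⟩⟩
  set M := ⨆ i, x i / y i with hM
  have hbdd : BddAbove (Set.range fun i => x i / y i) :=
    Set.Finite.bddAbove (Set.finite_range _)
  have hle : ∀ i, x i ≤ M * y i := fun i =>
    (div_le_iff₀ (hy i)).mp (le_ciSup hbdd i)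
  have hMpos : 0 < M := lt_of_lt_of_le (div_pos (hx ⟨0, hm⟩) (hy ⟨0, hm⟩))
    (le_ciSup hbdd ⟨0, hm⟩)
  have hjex : ∃ j, x j < M * y j := by
    by_contra h
    push_neg at h
    exact hxy ⟨M, hMpos, funext fun j => le_antisymm (hle j) (h j)⟩
  obtain ⟨j, hj⟩ := hjex
  have hAy : ∀ i, 0 < A.mulVec y i := fun i => by
    simp only [Matrix.mulVec, dotProduct]
    exact Finset.sum_pos (fun j _ => mul_pos (hA i j) (hy j)) univ_nonempty
  have hrow : ∀ i, A.mulVec x i < M * A.mulVec y i := fun i => by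
    simp only [Matrix.mulVec, dotProduct]
    rw [Finset.mul_sum]
    refine Finset.sum_lt_sum (fun j _ => ?_) ⟨j, Finset.mem_univ j, ?_⟩
    · calc A i j * x j ≤ A i j * (M * y j) :=
            mul_le_mul_of_nonneg_left (hle j) (hA i j).le
        _ = M * (A i j * y j) := by ring
    · calc A i j * x j < A i j * (M * y j) :=
            mul_lt_mul_of_pos_left hj (hA i j)
        _ = M * (A i j * y j) := by ring
  obtain ⟨i, hi, _⟩ := fin_sup_attained hn (fun i => A.mulVec x i / A.mulVec y i)
  rw [hi]
  exact (div_lt_iff₀ (hAy i)).mpr (by linarith [hrow i])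

lemma inf_eq_inv_sup {k : ℕ} (hk : 0 < k) (u v : Fin k → ℝ)
    (hu : ∀ i, 0 < u i) (hv : ∀ i, 0 < v i) :
    (⨅ i, u i / v i) = (⨆ i, v i / u i)⁻¹ := by
  haveI : Nonempty (Fin k) := ⟨⟨0, hk⟩⟩
  obtain ⟨i, hi, hmax⟩ := fin_sup_attained hk (fun i => v i / u i)
  rw [hi]
  refine le_antisymm ?_ ?_
  · calc (⨅ j, u j / v j) ≤ u i / v i :=
        ciInf_le (Set.Finite.bddBelow (Set.finite_range _)) i
      _ = (v i / u i)⁻¹ := (inv_div (v i) (u i)).symm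
  · refine le_ciInf fun j => ?_
    rw [inv_le_iff_one_le_mul₀ (div_pos (hv i) (hu i))]
    have h1 : v j / u j ≤ v i / u i := hmax j
    have hpos := div_pos (hu j) (hv j)
    calc (1:ℝ) = (v j / u j) * (u j / v j) := by
          rw [div_mul_div_comm, mul_comm (v j) (u j), div_self (mul_pos (hu j) (hv j)).ne']
      _ ≤ (v i / u i) * (u j / v j) := by
          exact mul_le_mul_of_nonneg_right h1 hpos.le
      _ = u j / v j * (v i / u i) := by ring

/-- A matrix with strictly positive entries strictly contracts the Hilbert projective
metric: if `x` is not a positive scalar multiple of `y` and `Ax` is not a positive scalar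
multiple of `Ay`, then `d(Ax, Ay) < d(x, y)`. -/
theorem hilbertDist_mulVec_lt {n m : ℕ} (hn : 0 < n) (hm : 0 < m)
    (A : Matrix (Fin n) (Fin m) ℝ) (hA : ∀ i j, 0 < A i j)
    (x y : Fin m → ℝ) (hx : ∀ i, 0 < x i) (hy : ∀ i, 0 < y i)
    (hxy : ¬ ∃ c : ℝ, 0 < c ∧ x = c • y)
    (hAxy : ¬ ∃ c : ℝ, 0 < c ∧ A.mulVec x = c • A.mulVec y) :
    hilbertDist (A.mulVec x) (A.mulVec y) < hilbertDist x y := by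
  haveI : Nonempty (Fin m) := ⟨⟨0, hm⟩⟩
  haveI : Nonempty (Fin n) := ⟨⟨0, hn⟩⟩
  have hAx : ∀ i, 0 < A.mulVec x i := fun i => by
    simp only [Matrix.mulVec, dotProduct]
    exact Finset.sum_pos (fun j _ => mul_pos (hA i j) (hx j)) Finset.univ_nonempty
  have hAy : ∀ i, 0 < A.mulVec y i := fun i => by
    simp only [Matrix.mulVec, dotProduct]
    exact Finset.sum_pos (fun j _ => mul_pos (hA i j) (hy j)) Finset.univ_nonempty
  have hyx : ¬ ∃ c : ℝ, 0 < c ∧ y = c • x := by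
    rintro ⟨c, hc, rfl⟩
    exact hxy ⟨c⁻¹, inv_pos.mpr hc, by
      rw [smul_smul, inv_mul_cancel₀ hc.ne', one_smul]⟩
  have h1 := sup_ratio_lt hn hm A hA x y hx hy hxy
  have h2 := sup_ratio_lt hn hm A hA y x hy hx hyx
  have supxy_pos : 0 < ⨆ i, x i / y i :=
    lt_of_lt_of_le (div_pos (hx ⟨0, hm⟩) (hy ⟨0, hm⟩))
      (le_ciSup (f := fun i => x i / y i)
        (Set.Finite.bddAbove (Set.finite_range _)) ⟨0, hm⟩)
  have supAxy_pos : 0 < ⨆ i, A.mulVec x i / A.mulVec y i :=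
    lt_of_lt_of_le (div_pos (hAx ⟨0, hn⟩) (hAy ⟨0, hn⟩))
      (le_ciSup (f := fun i => A.mulVec x i / A.mulVec y i)
        (Set.Finite.bddAbove (Set.finite_range _)) ⟨0, hn⟩)
  have supAyx_pos : 0 < ⨆ i, A.mulVec y i / A.mulVec x i :=
    lt_of_lt_of_le (div_pos (hAy ⟨0, hn⟩) (hAx ⟨0, hn⟩))
      (le_ciSup (f := fun i => A.mulVec y i / A.mulVec x i)
        (Set.Finite.bddAbove (Set.finite_range _)) ⟨0, hn⟩)
  unfold hilbertDist
  rw [inf_eq_inv_sup hn _ _ hAx hAy, inf_eq_inv_sup hm _ _ hx hy,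
    Real.log_inv, Real.log_inv]
  have l1 : Real.log (⨆ i, A.mulVec x i / A.mulVec y i) < Real.log (⨆ i, x i / y i) :=
    Real.log_lt_log supAxy_pos h1
  have l2 : Real.log (⨆ i, A.mulVec y i / A.mulVec x i) < Real.log (⨆ i, y i / x i) :=
    Real.log_lt_log supAyx_pos h2
  linarith
end

section
/- Fix an integer N ≥ 1 and reals 0 < δ ≤ M. Let (A_n)_{n≥1} be a sequence of N × N real matrices all of whose entries lie in the interval [δ, M]. For each m ≥ 1 let K_m = { (A_1 A_2 ⋯ A_m x)/‖A_1 A_2 ⋯ A_m x‖₁ : x ∈ ℝ^N, x ≥ 0 coordinatewise, x ≠ 0 }, where ‖v‖₁ = Σ_i |v_i|. Then the intersection ⋂_{m≥1} closure(K_m) consists of exactly one point. -/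
/-!
Normalizing the columns of `P_m = A₁ ⋯ A_m` exhibits `K_m` as the image of the standard simplex
under a column-stochastic matrix `Q_m`, and `Q_{m+1} = Q_m S_m` with `S_m` column-stochastic.
Since the column sums of `P_m` are comparable up to the factor `M / δ`, every entry of `S_m` is at
least `δ² / (N M²)`; by Dobrushin's estimate `S_m` therefore contracts sum-zero vectors in `ℓ¹`
by the factor `1 - δ² / M²`. Hence `K_m` has `ℓ¹`-diameter at most `2 (1 - δ² / M²) ^ m`, and the
closures of the nested sets `K_m` shrink to a single point.
-/

open scoped BigOperators

/-- The ordered product `A₁ A₂ ⋯ A_m` of the first `m` matrices of the sequence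
`(A_n)_{n ≥ 1}`. -/
def matProd {N : ℕ} (A : ℕ → Matrix (Fin N) (Fin N) ℝ) (m : ℕ) :
    Matrix (Fin N) (Fin N) ℝ :=
  ((List.range m).map (fun i => A (i + 1))).prod

/-- The set `K_m` of normalizations (in ℓ¹-norm) of images under `A₁ A₂ ⋯ A_m` of the
nonzero nonnegative vectors of `ℝ^N`. -/
def normImage {N : ℕ} (A : ℕ → Matrix (Fin N) (Fin N) ℝ) (m : ℕ) :
    Set (Fin N → ℝ) :=
  {w | ∃ x : Fin N → ℝ, (∀ i, 0 ≤ x i) ∧ x ≠ 0 ∧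
    w = (∑ i, |(matProd A m).mulVec x i|)⁻¹ • (matProd A m).mulVec x}

open Filter Topology Metric Matrix Finset

lemma exists_iInter_closure_eq_singleton {α : Type*} [MetricSpace α] [CompleteSpace α]
    {s : ℕ → Set α} {r : ℕ → ℝ} (hs : Antitone s) (hne : ∀ n, (s n).Nonempty)
    (hr : ∀ n, ∀ x ∈ s n, ∀ y ∈ s n, dist x y ≤ r n) (hr0 : Tendsto r atTop (𝓝 0)) :
    ∃ p, ⋂ n, closure (s n) = {p} := by
  have hbdd : ∀ n, Bornology.IsBounded (s n) := fun n =>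
    isBounded_iff.mpr ⟨r n, fun x hx y hy => hr n x hx y hy⟩
  have hdiam : ∀ n, diam (closure (s n)) ≤ r n := fun n => by
    obtain ⟨x, hx⟩ := hne n
    rw [diam_closure]
    exact diam_le_of_forall_dist_le ((dist_self x).symm.trans_le (hr n x hx x hx)) (hr n)
  obtain ⟨p, hp⟩ := nonempty_iInter_of_nonempty_biInter (fun n => isClosed_closure)
    (fun n => (hbdd n).closure)
    (fun n => (hne n).closure.mono (Set.subset_iInter₂ fun k hk => closure_mono (hs hk)))
    (squeeze_zero (fun n => diam_nonneg) hdiam hr0)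
  refine ⟨p, Set.eq_singleton_iff_unique_mem.mpr ⟨hp, fun q hq => dist_le_zero.mp ?_⟩⟩
  refine ge_of_tendsto' hr0 fun n => ?_
  exact (dist_le_diam_of_mem (hbdd n).closure (Set.mem_iInter.mp hq n)
    (Set.mem_iInter.mp hp n)).trans (hdiam n)

lemma dist_le_sum_abs_sub {ι : Type*} [Fintype ι] (x y : ι → ℝ) :
    dist x y ≤ ∑ i, |x i - y i| :=
  (dist_pi_le_iff (sum_nonneg fun _ _ => abs_nonneg _)).mpr fun i =>
    (Real.dist_eq _ _).trans_le (single_le_sum (f := fun i => |x i - y i|)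
      (fun _ _ => abs_nonneg _) (mem_univ i))

lemma mul_le_mul_of_mem_Icc {δ M a b : ℝ} (hδ : 0 ≤ δ) (ha : a ∈ Set.Icc δ M)
    (hb : b ∈ Set.Icc δ M) : δ * a ≤ M * b :=
  calc δ * a ≤ δ * M := mul_le_mul_of_nonneg_left ha.2 hδ
    _ ≤ b * M := mul_le_mul_of_nonneg_right hb.1 (hδ.trans (hb.1.trans hb.2))
    _ = M * b := mul_comm _ _

lemma one_sub_sq_div_sq_mem_Ico {δ M : ℝ} (hδ : 0 < δ) (hδM : δ ≤ M) :
    1 - δ ^ 2 / M ^ 2 ∈ Set.Ico 0 1 :=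
  ⟨sub_nonneg.mpr (div_le_one_of_le₀ (pow_le_pow_left₀ hδ.le hδM 2) (sq_nonneg M)),
    sub_lt_self _ (by have := hδ.trans_le hδM; positivity)⟩

lemma one_vecMul_apply {m n R : Type*} [Fintype m] [NonAssocSemiring R] (P : Matrix m n R)
    (j : n) : (1 ᵥ* P) j = ∑ i, P i j := by
  simp [vecMul, dotProduct]

lemma sum_abs_sub_le_two_of_mem_stdSimplex {ι : Type*} [Fintype ι] {u v : ι → ℝ}
    (hu : u ∈ stdSimplex ℝ ι) (hv : v ∈ stdSimplex ℝ ι) : ∑ i, |u i - v i| ≤ 2 := by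
  calc ∑ i, |u i - v i| ≤ ∑ i, (u i + v i) :=
        sum_le_sum fun i _ => (abs_sub _ _).trans_eq <| by
          rw [abs_of_nonneg (hu.1 i), abs_of_nonneg (hv.1 i)]
    _ = 2 := by rw [sum_add_distrib, hu.2, hv.2]; norm_num

section Positive

variable {ι : Type*} [Fintype ι]

lemma dotProduct_pos_of_pos {v x : ι → ℝ} (hv : ∀ i, 0 < v i) (hx : ∀ i, 0 ≤ x i)
    (hx0 : x ≠ 0) : 0 < v ⬝ᵥ x := by
  obtain ⟨j, hj⟩ := Function.ne_iff.mp hx0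
  exact sum_pos' (fun i _ => mul_nonneg (hv i).le (hx i))
    ⟨j, mem_univ j, mul_pos (hv j) ((hx j).lt_of_ne' hj)⟩

lemma mul_vecMul_le_mul_vecMul {δ M : ℝ} {v : ι → ℝ} {B : Matrix ι ι ℝ} (hδ : 0 ≤ δ)
    (hv : ∀ i, 0 ≤ v i) (hB : ∀ i j, B i j ∈ Set.Icc δ M) (j j' : ι) :
    δ * (v ᵥ* B) j ≤ M * (v ᵥ* B) j' := by
  simp only [vecMul, dotProduct, mul_sum]
  refine sum_le_sum fun k _ => ?_
  rw [mul_left_comm, mul_left_comm M]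
  exact mul_le_mul_of_nonneg_left (mul_le_mul_of_mem_Icc hδ (hB k j) (hB k j')) (hv k)

end Positive

section Stochastic

variable {ι : Type*} [Fintype ι] [DecidableEq ι]

lemma card_mul_le_one_of_mem_colStochastic {S : Matrix ι ι ℝ} {ε : ℝ}
    (hS : S ∈ colStochastic ℝ ι) (hε : ∀ i j, ε ≤ S i j) : Fintype.card ι * ε ≤ 1 := by
  cases isEmpty_or_nonempty ι with
  | inl _ => simp
  | inr h =>
    obtain ⟨j⟩ := h
    calc Fintype.card ι * ε = ∑ _i : ι, ε := by simp
      _ ≤ ∑ i, S i j := sum_le_sum fun i _ => hε i j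
      _ = 1 := sum_col_of_mem_colStochastic hS j

/-- Dobrushin's contraction estimate. -/
lemma sum_abs_mulVec_le_of_mem_colStochastic {S : Matrix ι ι ℝ} {ε : ℝ} {z : ι → ℝ}
    (hS : S ∈ colStochastic ℝ ι) (hε : ∀ i j, ε ≤ S i j) (hz : ∑ j, z j = 0) :
    ∑ i, |(S *ᵥ z) i| ≤ (1 - Fintype.card ι * ε) * ∑ j, |z j| := by
  -- on sum-zero vectors, subtracting `ε` from every entry of `S` does not change `S *ᵥ z`
  have hshift : ∀ i, (S *ᵥ z) i = ∑ j, (S i j - ε) * z j := by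
    intro i
    simp only [mulVec, dotProduct, sub_mul, sum_sub_distrib, ← mul_sum, hz, mul_zero, sub_zero]
  calc ∑ i, |(S *ᵥ z) i| ≤ ∑ i, ∑ j, (S i j - ε) * |z j| := by
        refine sum_le_sum fun i _ => ?_
        rw [hshift]
        refine (abs_sum_le_sum_abs _ _).trans_eq (sum_congr rfl fun j _ => ?_)
        rw [abs_mul, abs_of_nonneg (sub_nonneg.mpr (hε i j))]
    _ = ∑ j, (∑ i, (S i j - ε)) * |z j| := by
        rw [sum_comm]
        simp only [sum_mul]
    _ = (1 - Fintype.card ι * ε) * ∑ j, |z j| := by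
        simp [sum_sub_distrib, sum_col_of_mem_colStochastic hS, mul_sum]

lemma sum_abs_mulVec_le_pow {Q S : ℕ → Matrix ι ι ℝ} {ε : ℝ} (h0 : Q 0 = 1)
    (hQ : ∀ m, Q (m + 1) = Q m * S m) (hS : ∀ m, S m ∈ colStochastic ℝ ι)
    (hε : ∀ m i j, ε ≤ S m i j) (m : ℕ) {z : ι → ℝ} (hz : ∑ j, z j = 0) :
    ∑ i, |(Q m *ᵥ z) i| ≤ (1 - Fintype.card ι * ε) ^ m * ∑ j, |z j| := by
  induction m generalizing z with
  | zero => simp [h0]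
  | succ m ih =>
    have hθ : 0 ≤ 1 - Fintype.card ι * ε :=
      sub_nonneg.mpr (card_mul_le_one_of_mem_colStochastic (hS m) (hε m))
    calc ∑ i, |(Q (m + 1) *ᵥ z) i| = ∑ i, |(Q m *ᵥ (S m *ᵥ z)) i| := by
          rw [hQ, mulVec_mulVec]
      _ ≤ (1 - Fintype.card ι * ε) ^ m * ∑ j, |(S m *ᵥ z) j| :=
          ih ((sum_mulVec_of_mem_colStochastic (hS m)).trans hz)
      _ ≤ (1 - Fintype.card ι * ε) ^ m * ((1 - Fintype.card ι * ε) * ∑ j, |z j|) :=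
          mul_le_mul_of_nonneg_left
            (sum_abs_mulVec_le_of_mem_colStochastic (hS m) (hε m) hz) (pow_nonneg hθ m)
      _ = (1 - Fintype.card ι * ε) ^ (m + 1) * ∑ j, |z j| := by ring

end Stochastic

section ColNormalize

variable {ι : Type*} [Fintype ι] [DecidableEq ι]

noncomputable def colNormalize (P : Matrix ι ι ℝ) : Matrix ι ι ℝ :=
  P * diagonal (1 ᵥ* P)⁻¹

lemma colNormalize_apply (P : Matrix ι ι ℝ) (i j : ι) :
    colNormalize P i j = P i j / (1 ᵥ* P) j := by
  simp [colNormalize, mul_diagonal, div_eq_mul_inv]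

@[simp]
lemma colNormalize_one : colNormalize (1 : Matrix ι ι ℝ) = 1 := by
  simp [colNormalize]

lemma diagonal_inv_mul_diagonal {c : ι → ℝ} (hc : ∀ j, c j ≠ 0) :
    diagonal c⁻¹ * diagonal c = 1 := by
  rw [diagonal_mul_diagonal', ← diagonal_one]
  congr 1
  funext j
  exact inv_mul_cancel₀ (hc j)

lemma one_vecMul_diagonal_mul (c : ι → ℝ) (A : Matrix ι ι ℝ) :
    1 ᵥ* (diagonal c * A) = c ᵥ* A := by
  rw [← vecMul_vecMul]
  congr 1
  funext j
  simp [vecMul_diagonal]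

lemma colNormalize_mem_colStochastic {P : Matrix ι ι ℝ} (hP : ∀ i j, 0 ≤ P i j)
    (hc : ∀ j, 0 < (1 ᵥ* P) j) : colNormalize P ∈ colStochastic ℝ ι := by
  refine mem_colStochastic.mpr ⟨fun i j => ?_, ?_⟩
  · rw [colNormalize_apply]
    exact div_nonneg (hP i j) (hc j).le
  · funext j
    simp [colNormalize, ← vecMul_vecMul, vecMul_diagonal, (hc j).ne']

lemma colNormalize_mul {P : Matrix ι ι ℝ} (hc : ∀ j, (1 ᵥ* P) j ≠ 0) (A : Matrix ι ι ℝ) :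
    colNormalize (P * A) = colNormalize P * colNormalize (diagonal (1 ᵥ* P) * A) := by
  rw [colNormalize, colNormalize, colNormalize, one_vecMul_diagonal_mul, ← vecMul_vecMul]
  simp only [Matrix.mul_assoc]
  rw [← Matrix.mul_assoc (diagonal _), diagonal_inv_mul_diagonal hc, Matrix.one_mul]

lemma div_card_mul_le_colNormalize_apply {B : Matrix ι ι ℝ} {a b : ℝ} (hb : 0 < b)
    (hB : ∀ i i' j, a * B i' j ≤ b * B i j) {j : ι} (hc : 0 < (1 ᵥ* B) j) (i : ι) :
    a / (Fintype.card ι * b) ≤ colNormalize B i j := by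
  have hcard : (0 : ℝ) < Fintype.card ι := by exact_mod_cast Fintype.card_pos_iff.mpr ⟨i⟩
  have hsum : a * (1 ᵥ* B) j ≤ Fintype.card ι * b * B i j := by
    calc a * (1 ᵥ* B) j = ∑ i', a * B i' j := by rw [one_vecMul_apply, mul_sum]
      _ ≤ ∑ _i' : ι, b * B i j := sum_le_sum fun i' _ => hB i i' j
      _ = Fintype.card ι * b * B i j := by simp [mul_assoc]
  rw [colNormalize_apply, div_le_div_iff₀ (by positivity) hc]
  linarith

lemma normalize_mulVec_mem_image_stdSimplex {P : Matrix ι ι ℝ} (hP : ∀ i j, 0 ≤ P i j)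
    (hc : ∀ j, 0 < (1 ᵥ* P) j) {x : ι → ℝ} (hx : ∀ i, 0 ≤ x i) (hx0 : x ≠ 0) :
    (∑ i, |(P *ᵥ x) i|)⁻¹ • P *ᵥ x ∈ (colNormalize P).mulVec '' stdSimplex ℝ ι := by
  set c := 1 ᵥ* P
  have hmass : ∑ i, |(P *ᵥ x) i| = c ⬝ᵥ x := by
    rw [← dotProduct_mulVec, one_dotProduct]
    exact sum_congr rfl fun i _ =>
      abs_of_nonneg (sum_nonneg fun j _ => mul_nonneg (hP i j) (hx j))
  have hpos : 0 < c ⬝ᵥ x := dotProduct_pos_of_pos hc hx hx0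
  refine ⟨(c ⬝ᵥ x)⁻¹ • diagonal c *ᵥ x, ⟨fun i => ?_, ?_⟩, ?_⟩
  · rw [Pi.smul_apply, mulVec_diagonal, smul_eq_mul]
    exact mul_nonneg (inv_nonneg.mpr hpos.le) (mul_nonneg (hc i).le (hx i))
  · simp only [Pi.smul_apply, mulVec_diagonal, smul_eq_mul, ← mul_sum]
    exact inv_mul_cancel₀ hpos.ne'
  · rw [hmass, mulVec_smul, colNormalize, ← mulVec_mulVec, mulVec_mulVec _ (diagonal _),
      diagonal_inv_mul_diagonal fun j => (hc j).ne', one_mulVec]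

end ColNormalize

section MatProd

variable {N : ℕ} {A : ℕ → Matrix (Fin N) (Fin N) ℝ}

@[simp]
lemma matProd_zero : matProd A 0 = 1 := by
  simp [matProd]

lemma matProd_succ (m : ℕ) : matProd A (m + 1) = matProd A m * A (m + 1) := by
  simp [matProd, List.range_succ]

lemma one_vecMul_matProd_succ (m : ℕ) :
    1 ᵥ* matProd A (m + 1) = (1 ᵥ* matProd A m) ᵥ* A (m + 1) := by
  rw [matProd_succ, vecMul_vecMul]

lemma matProd_nonneg (hA : ∀ n, 1 ≤ n → ∀ i j, 0 ≤ A n i j) (m : ℕ) (i j : Fin N) :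
    0 ≤ matProd A m i j := by
  induction m generalizing j with
  | zero =>
    rw [matProd_zero, one_apply]
    split_ifs <;> norm_num
  | succ m ih =>
    rw [matProd_succ, mul_apply]
    exact sum_nonneg fun k _ => mul_nonneg (ih k) (hA (m + 1) m.succ_pos k j)

lemma one_vecMul_matProd_pos [Nonempty (Fin N)] (hA : ∀ n, 1 ≤ n → ∀ i j, 0 < A n i j)
    (m : ℕ) (j : Fin N) : 0 < (1 ᵥ* matProd A m) j := by
  induction m generalizing j with
  | zero => simp
  | succ m ih =>
    rw [one_vecMul_matProd_succ]
    exact sum_pos (fun k _ => mul_pos (ih k) (hA (m + 1) m.succ_pos k j)) univ_nonempty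

lemma mul_one_vecMul_matProd_le {δ M : ℝ} (hδ : 0 ≤ δ) (hδM : δ ≤ M)
    (hA : ∀ n, 1 ≤ n → ∀ i j, A n i j ∈ Set.Icc δ M) (m : ℕ) (k k' : Fin N) :
    δ * (1 ᵥ* matProd A m) k ≤ M * (1 ᵥ* matProd A m) k' := by
  cases m with
  | zero => simpa using hδM
  | succ m =>
    rw [one_vecMul_matProd_succ]
    refine mul_vecMul_le_mul_vecMul hδ (fun i => ?_) (hA (m + 1) m.succ_pos) k k'
    rw [one_vecMul_apply]
    exact sum_nonneg fun i' _ =>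
      matProd_nonneg (fun n hn i j => hδ.trans (hA n hn i j).1) m i' i

noncomputable def transitionMatrix (A : ℕ → Matrix (Fin N) (Fin N) ℝ) (m : ℕ) :
    Matrix (Fin N) (Fin N) ℝ :=
  colNormalize (diagonal (1 ᵥ* matProd A m) * A (m + 1))

lemma colNormalize_matProd_succ [Nonempty (Fin N)] (hA : ∀ n, 1 ≤ n → ∀ i j, 0 < A n i j)
    (m : ℕ) :
    colNormalize (matProd A (m + 1)) = colNormalize (matProd A m) * transitionMatrix A m := by
  rw [matProd_succ, colNormalize_mul fun j => (one_vecMul_matProd_pos hA m j).ne',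
    transitionMatrix]

lemma one_vecMul_diagonal_mul_eq_one_vecMul_matProd_succ (m : ℕ) :
    1 ᵥ* (diagonal (1 ᵥ* matProd A m) * A (m + 1)) = 1 ᵥ* matProd A (m + 1) := by
  rw [one_vecMul_diagonal_mul, one_vecMul_matProd_succ]

lemma transitionMatrix_mem_colStochastic [Nonempty (Fin N)]
    (hA : ∀ n, 1 ≤ n → ∀ i j, 0 < A n i j) (m : ℕ) :
    transitionMatrix A m ∈ colStochastic ℝ (Fin N) := by
  refine colNormalize_mem_colStochastic (fun i j => ?_) fun j => ?_
  · rw [diagonal_mul]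
    exact mul_nonneg (one_vecMul_matProd_pos hA m i).le (hA (m + 1) m.succ_pos i j).le
  · rw [one_vecMul_diagonal_mul_eq_one_vecMul_matProd_succ]
    exact one_vecMul_matProd_pos hA (m + 1) j

lemma le_transitionMatrix_apply [Nonempty (Fin N)] {δ M : ℝ} (hδ : 0 < δ) (hδM : δ ≤ M)
    (hA : ∀ n, 1 ≤ n → ∀ i j, A n i j ∈ Set.Icc δ M) (m : ℕ) (i j : Fin N) :
    δ ^ 2 / (N * M ^ 2) ≤ transitionMatrix A m i j := by
  have hpos : ∀ n, 1 ≤ n → ∀ i j, 0 < A n i j := fun n hn i j => hδ.trans_le (hA n hn i j).1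
  have hc := one_vecMul_matProd_pos hpos m
  have hM : 0 < M := hδ.trans_le hδM
  have hB : ∀ i i' j, δ ^ 2 * (diagonal (1 ᵥ* matProd A m) * A (m + 1)) i' j ≤
      M ^ 2 * (diagonal (1 ᵥ* matProd A m) * A (m + 1)) i j := by
    intro i i' j
    rw [diagonal_mul, diagonal_mul]
    calc δ ^ 2 * ((1 ᵥ* matProd A m) i' * A (m + 1) i' j)
        = (δ * (1 ᵥ* matProd A m) i') * (δ * A (m + 1) i' j) := by ring
      _ ≤ (M * (1 ᵥ* matProd A m) i) * (M * A (m + 1) i j) :=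
          mul_le_mul (mul_one_vecMul_matProd_le hδ.le hδM hA m i' i)
            (mul_le_mul_of_mem_Icc hδ.le (hA (m + 1) m.succ_pos i' j)
              (hA (m + 1) m.succ_pos i j))
            (mul_pos hδ (hpos (m + 1) m.succ_pos i' j)).le (mul_pos hM (hc i)).le
      _ = M ^ 2 * ((1 ᵥ* matProd A m) i * A (m + 1) i j) := by ring
  have hcol : 0 < (1 ᵥ* (diagonal (1 ᵥ* matProd A m) * A (m + 1))) j := by
    rw [one_vecMul_diagonal_mul_eq_one_vecMul_matProd_succ]
    exact one_vecMul_matProd_pos hpos (m + 1) j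
  simpa [transitionMatrix] using div_card_mul_le_colNormalize_apply (pow_pos hM 2) hB hcol i

end MatProd

section NormImage

variable {N : ℕ} {A : ℕ → Matrix (Fin N) (Fin N) ℝ}

lemma normImage_subset_image_stdSimplex [Nonempty (Fin N)]
    (hA : ∀ n, 1 ≤ n → ∀ i j, 0 < A n i j) (m : ℕ) :
    normImage A m ⊆ (colNormalize (matProd A m)).mulVec '' stdSimplex ℝ (Fin N) := by
  rintro w ⟨x, hx, hx0, rfl⟩
  exact normalize_mulVec_mem_image_stdSimplex
    (matProd_nonneg (fun n hn i j => (hA n hn i j).le) m) (one_vecMul_matProd_pos hA m) hx hx0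

lemma sum_abs_sub_le_of_mem_normImage [Nonempty (Fin N)] {δ M : ℝ} (hδ : 0 < δ)
    (hδM : δ ≤ M) (hA : ∀ n, 1 ≤ n → ∀ i j, A n i j ∈ Set.Icc δ M) {m : ℕ}
    {w₁ w₂ : Fin N → ℝ} (h₁ : w₁ ∈ normImage A m) (h₂ : w₂ ∈ normImage A m) :
    ∑ i, |w₁ i - w₂ i| ≤ (1 - δ ^ 2 / M ^ 2) ^ m * 2 := by
  have hpos : ∀ n, 1 ≤ n → ∀ i j, 0 < A n i j := fun n hn i j => hδ.trans_le (hA n hn i j).1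
  obtain ⟨u, hu, rfl⟩ := normImage_subset_image_stdSimplex hpos m h₁
  obtain ⟨v, hv, rfl⟩ := normImage_subset_image_stdSimplex hpos m h₂
  have hN : (N : ℝ) ≠ 0 := by exact_mod_cast (Fin.pos_iff_nonempty.mpr ‹_›).ne'
  have hθ : 1 - Fintype.card (Fin N) * (δ ^ 2 / (N * M ^ 2)) = 1 - δ ^ 2 / M ^ 2 := by
    rw [Fintype.card_fin]
    field_simp
  have hcontr := sum_abs_mulVec_le_pow (Q := fun m => colNormalize (matProd A m))
    (by simp) (colNormalize_matProd_succ hpos) (transitionMatrix_mem_colStochastic hpos)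
    (le_transitionMatrix_apply hδ hδM hA) m (z := u - v) (by simp [sum_sub_distrib, hu.2, hv.2])
  rw [hθ, mulVec_sub] at hcontr
  exact hcontr.trans (mul_le_mul_of_nonneg_left (sum_abs_sub_le_two_of_mem_stdSimplex hu hv)
    (pow_nonneg (one_sub_sq_div_sq_mem_Ico hδ hδM).1 m))

lemma normImage_antitone [Nonempty (Fin N)] (hA : ∀ n, 1 ≤ n → ∀ i j, 0 < A n i j) :
    Antitone (normImage A) := by
  refine antitone_nat_of_succ_le fun m => ?_
  rintro w ⟨x, hx, hx0, rfl⟩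
  have hAx : ∀ i, 0 < (A (m + 1) *ᵥ x) i := fun i =>
    dotProduct_pos_of_pos (hA (m + 1) m.succ_pos i) hx hx0
  obtain ⟨i⟩ := ‹Nonempty (Fin N)›
  refine ⟨A (m + 1) *ᵥ x, fun i => (hAx i).le, fun h => (hAx i).ne' (congrFun h i), ?_⟩
  rw [matProd_succ, mulVec_mulVec]

lemma normImage_nonempty [Nonempty (Fin N)] (A : ℕ → Matrix (Fin N) (Fin N) ℝ) (m : ℕ) :
    (normImage A m).Nonempty :=
  ⟨_, 1, fun _ => zero_le_one, one_ne_zero, rfl⟩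

end NormImage

/-- If all entries of the matrices `A_n` (`n ≥ 1`) lie in `[δ, M]` with `0 < δ ≤ M`,
then the nested intersection `⋂_{m ≥ 1} closure(K_m)` of the normalized images of the
nonnegative cone consists of exactly one point. -/
theorem iInter_closure_normImage_singleton {N : ℕ} (hN : 1 ≤ N)
    (δ M : ℝ) (hδ : 0 < δ) (hδM : δ ≤ M)
    (A : ℕ → Matrix (Fin N) (Fin N) ℝ)
    (hA : ∀ n, 1 ≤ n → ∀ i j, A n i j ∈ Set.Icc δ M) :
    ∃ p : Fin N → ℝ,
      (⋂ (m : ℕ) (_ : 1 ≤ m), closure (normImage A m)) = {p} := by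
  have : Nonempty (Fin N) := Fin.pos_iff_nonempty.mp hN
  have hpos : ∀ n, 1 ≤ n → ∀ i j, 0 < A n i j := fun n hn i j => hδ.trans_le (hA n hn i j).1
  obtain ⟨hθ0, hθ1⟩ := one_sub_sq_div_sq_mem_Ico hδ hδM
  obtain ⟨p, hp⟩ := exists_iInter_closure_eq_singleton (normImage_antitone hpos)
    (normImage_nonempty A) (fun m w₁ h₁ w₂ h₂ => (dist_le_sum_abs_sub w₁ w₂).trans
      (sum_abs_sub_le_of_mem_normImage hδ hδM hA h₁ h₂))
    (by simpa using (tendsto_pow_atTop_nhds_zero_of_lt_one hθ0 hθ1).mul_const 2)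
  have hanti : Antitone fun m => closure (normImage A m) := fun _ _ h =>
    closure_mono (normImage_antitone hpos h)
  refine ⟨p, ?_⟩
  rw [← hp]
  exact (Set.iInter_ge_eq_iInter_nat_add _ 1).trans (hanti.iInf_nat_add 1)
end

section
/- Let N ≥ 1 be an integer and let (K_m)_{m≥1} be a decreasing sequence (K_{m+1} ⊆ K_m) of nonempty compact subsets of ℝ^d, each of which is the convex hull of at most N points. Then the intersection ⋂_{m≥1} K_m is the convex hull of at most N points; in particular it is a nonempty compact convex set with at most N extreme points. -/
/-!
Enumerate the vertices of the `m`-th hull as an `N`-tuple. All tuples lie in the compact set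
`K₁`, so a subsequence converges to a tuple `f`. Each `f i` lies in every `K m`, which gives
`conv f ⊆ ⋂ K m`. Conversely, once the tuples are `δ`-close to `f`, their hulls lie in the
(convex) `δ`-thickening of `conv f`, so a point of the intersection lies in the closure of
`conv f`, which is `conv f` itself.
-/

open Filter Topology Metric Set

theorem Finset.exists_fin_range_eq {α : Type*} {S : Finset α} (hS : S.Nonempty) {N : ℕ}
    (hN : S.card ≤ N) : ∃ g : Fin N → α, Set.range g = S := by
  obtain ⟨x, hx⟩ := hS
  obtain ⟨g, hg⟩ := Function.exists_surjective_iff.2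
    ⟨⟨fun _ : Fin N => (⟨x, hx⟩ : S)⟩, ⟨S.equivFin.toEmbedding.trans (Fin.castLEEmb hN)⟩⟩
  exact ⟨(↑) ∘ g, by rw [range_comp, hg.range_eq, image_univ, Subtype.range_coe]⟩

section NormedSpace

variable {E : Type*} [NormedAddCommGroup E] [NormedSpace ℝ E]

theorem convexHull_subset_thickening_convexHull {s t : Set E} {δ : ℝ}
    (h : s ⊆ thickening δ t) : convexHull ℝ s ⊆ thickening δ (convexHull ℝ t) :=
  convexHull_min (h.trans (thickening_subset_of_subset δ (subset_convexHull ℝ t)))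
    ((convex_convexHull ℝ t).thickening δ)

theorem mem_convexHull_range_of_tendsto {ι : Type*} [Finite ι] {g : ℕ → ι → E} {f : ι → E}
    (hg : Tendsto g atTop (𝓝 f)) {x : E} (hx : ∀ k, x ∈ convexHull ℝ (range (g k))) :
    x ∈ convexHull ℝ (range f) := by
  have : Fintype ι := Fintype.ofFinite ι
  rw [← ((Set.finite_range f).isCompact_convexHull (𝕜 := ℝ)).isClosed.closure_eq,
    closure_eq_iInter_thickening]
  refine mem_iInter₂.2 fun δ hδ => ?_
  obtain ⟨k, hk⟩ := (hg.eventually (ball_mem_nhds f hδ)).exists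
  refine convexHull_subset_thickening_convexHull ?_ (hx k)
  rintro _ ⟨i, rfl⟩
  exact mem_thickening_iff.2
    ⟨f i, mem_range_self i, (dist_le_pi_dist (g k) f i).trans_lt (mem_ball.1 hk)⟩

theorem exists_iInter_eq_convexHull_range_of_antitone {ι : Type*} [Finite ι] {K : ℕ → Set E}
    (hK : Antitone K) (hhull : ∀ n, ∃ g : ι → E, K n = convexHull ℝ (range g)) :
    ∃ f : ι → E, ⋂ n, K n = convexHull ℝ (range f) := by
  choose g hg using hhull
  have hgK : ∀ n i, g n i ∈ K n := fun n i => (hg n).symm ▸ subset_convexHull ℝ _ ⟨i, rfl⟩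
  have hKcompact : ∀ n, IsCompact (K n) := fun n =>
    (hg n).symm ▸ (Set.finite_range (g n)).isCompact_convexHull (𝕜 := ℝ)
  obtain ⟨f, -, φ, hφ, hgf⟩ := (isCompact_univ_pi fun _ : ι => hKcompact 0).tendsto_subseq
    (x := g) fun n => mem_univ_pi.2 fun i => hK (Nat.zero_le n) (hgK n i)
  refine ⟨f, Subset.antisymm (fun x hx => ?_) (subset_iInter fun n => ?_)⟩
  · refine mem_convexHull_range_of_tendsto hgf fun k => ?_
    exact hg (φ k) ▸ mem_iInter.1 hx (φ k)
  · have hfK : ∀ i, f i ∈ K n := fun i =>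
      (hKcompact n).isClosed.mem_of_tendsto (tendsto_pi_nhds.1 hgf i)
        ((eventually_ge_atTop n).mono fun k hk => hK (hk.trans hφ.le_apply) (hgK (φ k) i))
    exact convexHull_min (range_subset_iff.2 hfK) ((hg n).symm ▸ convex_convexHull ℝ _)

end NormedSpace

theorem iInter_of_decreasing_hulls_general {d N : ℕ} (hN : 1 ≤ N)
    (K : ℕ → Set (Fin d → ℝ))
    (hne : ∀ m, 1 ≤ m → (K m).Nonempty)
    (hhull : ∀ m, 1 ≤ m → ∃ S : Finset (Fin d → ℝ), S.card ≤ N ∧ K m = convexHull ℝ ↑S)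
    (hdec : ∀ m, 1 ≤ m → K (m + 1) ⊆ K m) :
    (∃ S : Finset (Fin d → ℝ), S.card ≤ N ∧
        (⋂ (m : ℕ) (_ : 1 ≤ m), K m) = convexHull ℝ ↑S) ∧
      (⋂ (m : ℕ) (_ : 1 ≤ m), K m).Nonempty ∧
      IsCompact (⋂ (m : ℕ) (_ : 1 ≤ m), K m) ∧
      Convex ℝ (⋂ (m : ℕ) (_ : 1 ≤ m), K m) ∧
      ∃ T : Finset (Fin d → ℝ), T.card ≤ N ∧
        Set.extremePoints ℝ (⋂ (m : ℕ) (_ : 1 ≤ m), K m) ⊆ ↑T := by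
  have hanti : Antitone fun n => K (n + 1) :=
    antitone_nat_of_succ_le fun n => hdec (n + 1) (Nat.le_add_left 1 n)
  have htuple : ∀ n, ∃ g : Fin N → (Fin d → ℝ), K (n + 1) = convexHull ℝ (range g) := by
    intro n
    obtain ⟨S, hScard, hS⟩ := hhull (n + 1) (Nat.le_add_left 1 n)
    have hSne : S.Nonempty := by
      simpa [hS] using hne (n + 1) (Nat.le_add_left 1 n)
    obtain ⟨g, hg⟩ := S.exists_fin_range_eq hSne hScard
    exact ⟨g, hg ▸ hS⟩
  obtain ⟨f, hf⟩ := exists_iInter_eq_convexHull_range_of_antitone hanti htuple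
  have hI : (⋂ (m : ℕ) (_ : 1 ≤ m), K m) = convexHull ℝ ↑(Finset.univ.image f) := by
    rw [← iInter_ge_eq_iInter_nat_add] at hf
    simpa using hf
  have hcard : (Finset.univ.image f).card ≤ N :=
    Finset.card_image_le.trans (Finset.card_fin N).le
  rw [hI]
  exact ⟨⟨_, hcard, rfl⟩, ⟨f ⟨0, hN⟩, subset_convexHull ℝ _ (by simp)⟩,
    (Finset.finite_toSet _).isCompact_convexHull (𝕜 := ℝ), convex_convexHull ℝ _,
    ⟨_, hcard, extremePoints_convexHull_subset⟩⟩

/-- A decreasing sequence `(K_m)_{m ≥ 1}` of nonempty compact subsets of `ℝ^d`, each the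
convex hull of at most `N` points, has intersection which is again the convex hull of at
most `N` points; in particular it is a nonempty compact convex set with at most `N`
extreme points. -/
theorem iInter_of_decreasing_hulls {d N : ℕ} (hN : 1 ≤ N)
    (K : ℕ → Set (Fin d → ℝ))
    (hne : ∀ m, 1 ≤ m → (K m).Nonempty)
    (hcomp : ∀ m, 1 ≤ m → IsCompact (K m))
    (hhull : ∀ m, 1 ≤ m → ∃ S : Finset (Fin d → ℝ), S.card ≤ N ∧ K m = convexHull ℝ ↑S)
    (hdec : ∀ m, 1 ≤ m → K (m + 1) ⊆ K m) :
    (∃ S : Finset (Fin d → ℝ), S.card ≤ N ∧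
        (⋂ (m : ℕ) (_ : 1 ≤ m), K m) = convexHull ℝ ↑S) ∧
      (⋂ (m : ℕ) (_ : 1 ≤ m), K m).Nonempty ∧
      IsCompact (⋂ (m : ℕ) (_ : 1 ≤ m), K m) ∧
      Convex ℝ (⋂ (m : ℕ) (_ : 1 ≤ m), K m) ∧
      ∃ T : Finset (Fin d → ℝ), T.card ≤ N ∧
        Set.extremePoints ℝ (⋂ (m : ℕ) (_ : 1 ≤ m), K m) ⊆ ↑T :=
  iInter_of_decreasing_hulls_general hN K hne hhull hdec
end
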